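/- arXiv:2507.17697 — 6 statements merged into one kernel-verified Lean document; each statement's English description precedes it below -/
import Mathlib

section
/- Let Θ be a metric space of parameters with true parameter θ0 ∈ Θ, and let y_1,…,y_n be i.i.d. observations with density p(·|θ0). Define M_n(θ) = (1/n)·Σ_{i=1}^n ln(p(y_i|θ)/p(y_i|θ0)) and M(θ) = −KL(p(·|θ0) ‖ p(·|θ)). Assume: (i) the log-prior ln p(θ) is continuous and bounded from above on Θ and p(θ0) > 0; (ii) sup_{θ∈Θ} |M_n(θ) − M(θ)| → 0 in probability; (iii) for every ε > 0, sup_{θ : d(θ,θ0) ≥ ε} M(θ) < M(θ0). If μ_n is, for each n, a maximizer over Θ of θ ↦ M_n(θ) + (1/n)·ln p(θ), then μ_n → θ0 in probability. -/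
/-!
On the event `sup_θ |Mₙ(θ) − M(θ)| ≤ δ/4`, a maximizer `μₙ` with `M(μₙ) ≤ M(θ0) − δ` would satisfy
`Mₙ(θ0) − Mₙ(μₙ) ≥ δ/2`, whereas maximality bounds this difference by the prior term
`(B − ln p(θ0))/n`, which eventually drops below `δ/4`. So the event `d(μₙ, θ0) > ε` is eventually
contained in an event whose probability tends to `0`.
-/

open MeasureTheory ProbabilityTheory Filter

lemma exists_lt_abs_sub_of_separated {α : Type*} {f g : α → ℝ} {a b : α} {c δ η : ℝ}
    (hfab : f a ≤ f b + c) (hgab : g b ≤ g a - δ) (hη : 2 * η < δ - c) :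
    ∃ x, η < |f x - g x| := by
  by_contra! hclose
  have ha := abs_le.1 (hclose a)
  have hb := abs_le.1 (hclose b)
  linarith [ha.1, hb.2]

lemma tendsto_measure_zero_of_eventually_subset {α ι : Type*} [MeasurableSpace α]
    {μ : Measure α} {l : Filter ι} {s t : ι → Set α} (hst : ∀ᶠ i in l, s i ⊆ t i)
    (ht : Tendsto (fun i => μ (t i)) l (nhds 0)) : Tendsto (fun i => μ (s i)) l (nhds 0) :=
  tendsto_of_tendsto_of_tendsto_of_le_of_le' tendsto_const_nhds ht
    (Eventually.of_forall fun _ => zero_le) (hst.mono fun _ h => measure_mono h)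

theorem map_estimator_consistent_general
    {Θ : Type*} [MetricSpace Θ] (θ0 : Θ)
    {Ω : Type*} [MeasurableSpace Ω] (P : Measure Ω)
    (prior : Θ → ℝ)
    -- the random criterion `Mₙ` and its deterministic limit `M = -KL`
    (Mn : ℕ → Ω → Θ → ℝ)
    (M : Θ → ℝ)
    -- (i) conditions on the prior
    (hprior_bdd : ∃ B, ∀ θ, Real.log (prior θ) ≤ B)
    -- (ii) `sup_θ |Mₙ(θ) − M(θ)| → 0` in probability
    (hunif : ∀ ε > 0,
      Tendsto (fun n => P {ω | ∃ θ, ε < |Mn n ω θ - M θ|}) atTop (nhds 0))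
    -- (iii) well-separated maximum: `sup_{d(θ,θ0) ≥ ε} M(θ) < M(θ0)`
    (hsep : ∀ ε > 0, ∃ δ > 0, ∀ θ, ε ≤ dist θ θ0 → M θ ≤ M θ0 - δ)
    -- `μₙ` maximizes `θ ↦ Mₙ(θ) + (1/n)·ln p(θ)`
    (μn : ℕ → Ω → Θ)
    (hmax : ∀ n ω θ,
      Mn n ω θ + (n : ℝ)⁻¹ * Real.log (prior θ)
        ≤ Mn n ω (μn n ω) + (n : ℝ)⁻¹ * Real.log (prior (μn n ω))) :
    -- conclusion: `μₙ → θ0` in probability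
    ∀ ε > 0, Tendsto (fun n => P {ω | ε < dist (μn n ω) θ0}) atTop (nhds 0) := by
  intro ε hε
  obtain ⟨δ, hδ, hsepδ⟩ := hsep ε hε
  obtain ⟨B, hB⟩ := hprior_bdd
  have hprior_term : ∀ᶠ n : ℕ in atTop, (n : ℝ)⁻¹ * (B - Real.log (prior θ0)) < δ / 4 := by
    have hlim := tendsto_inv_atTop_nhds_zero_nat.mul_const (B - Real.log (prior θ0))
    rw [zero_mul] at hlim
    exact hlim.eventually (gt_mem_nhds (by positivity))
  refine tendsto_measure_zero_of_eventually_subset ?_ (hunif (δ / 4) (by positivity))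
  filter_upwards [hprior_term] with n hn ω hω
  have hgain : Mn n ω θ0 ≤ Mn n ω (μn n ω) + (n : ℝ)⁻¹ * (B - Real.log (prior θ0)) := by
    have hpen := mul_le_mul_of_nonneg_left (hB (μn n ω)) (inv_nonneg.2 n.cast_nonneg)
    linarith [hmax n ω θ0]
  exact exists_lt_abs_sub_of_separated hgain (hsepδ _ hω.le) (by linarith)

/-- Consistency of the MAP estimator: with `y₁, …, yₙ` i.i.d. with density
`p(·|θ0)`, `Mₙ(θ) = (1/n) ∑ ln (p(yᵢ|θ)/p(yᵢ|θ0))` and `M(θ) = −KL(p(·|θ0) ‖ p(·|θ))`,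
assuming a continuous log-prior bounded from above with `p(θ0) > 0`, uniform convergence in
probability of `Mₙ` to `M`, and a well-separated maximum of `M` at `θ0`, any sequence of
maximizers `μₙ` of `θ ↦ Mₙ(θ) + (1/n) ln p(θ)` converges in probability to `θ0`. -/
theorem map_estimator_consistent
    {Θ : Type*} [MetricSpace Θ] (θ0 : Θ)
    {Ω : Type*} [MeasurableSpace Ω] (P : Measure Ω) [IsProbabilityMeasure P]
    (p : Θ → ℝ → ℝ) (prior : Θ → ℝ)
    -- i.i.d. observations with density `p (·|θ0)` with respect to Lebesgue measure
    (y : ℕ → Ω → ℝ) (hmeas : ∀ i, Measurable (y i))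
    (hindep : iIndepFun y P)
    (hlaw : ∀ i, Measure.map (y i) P
      = volume.withDensity fun x => ENNReal.ofReal (p θ0 x))
    -- the random criterion `Mₙ` and its deterministic limit `M = -KL`
    (Mn : ℕ → Ω → Θ → ℝ)
    (hMn : ∀ n ω θ, Mn n ω θ
      = (n : ℝ)⁻¹ * ∑ i ∈ Finset.range n, Real.log (p θ (y i ω) / p θ0 (y i ω)))
    (M : Θ → ℝ)
    (hM : ∀ θ, M θ = - ∫ x, p θ0 x * Real.log (p θ0 x / p θ x))
    -- (i) conditions on the prior
    (hprior_cont : Continuous fun θ => Real.log (prior θ))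
    (hprior_bdd : ∃ B, ∀ θ, Real.log (prior θ) ≤ B)
    (hprior_pos : 0 < prior θ0)
    -- (ii) `sup_θ |Mₙ(θ) − M(θ)| → 0` in probability
    (hunif : ∀ ε > 0,
      Tendsto (fun n => P {ω | ∃ θ, ε < |Mn n ω θ - M θ|}) atTop (nhds 0))
    -- (iii) well-separated maximum: `sup_{d(θ,θ0) ≥ ε} M(θ) < M(θ0)`
    (hsep : ∀ ε > 0, ∃ δ > 0, ∀ θ, ε ≤ dist θ θ0 → M θ ≤ M θ0 - δ)
    -- `μₙ` maximizes `θ ↦ Mₙ(θ) + (1/n)·ln p(θ)`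
    (μn : ℕ → Ω → Θ)
    (hmax : ∀ n ω θ,
      Mn n ω θ + (n : ℝ)⁻¹ * Real.log (prior θ)
        ≤ Mn n ω (μn n ω) + (n : ℝ)⁻¹ * Real.log (prior (μn n ω))) :
    -- conclusion: `μₙ → θ0` in probability
    ∀ ε > 0, Tendsto (fun n => P {ω | ε < dist (μn n ω) θ0}) atTop (nhds 0) :=
  map_estimator_consistent_general θ0 P prior Mn M hprior_bdd hunif hsep μn hmax
end

section
/- Consider the single-parameter nonlinear transform model: y_1,…,y_n i.i.d. with density p(y|θ) = N(y; f(θ), σ²) for a known constant σ > 0, where f : ℝ → ℝ is continuous and the model is identifiable in the sense that θ ≠ θ0 implies f(θ) ≠ f(θ0); the prior is p(θ) = N(θ; m_θ, s_θ²) with s_θ > 0. If μ_n is, for each n, a maximizer over ℝ of θ ↦ Σ_{i=1}^n ln p(y_i|θ) + ln p(θ), then μ_n → θ0 in probability (under the law with parameter θ0). -/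
/-!
Comparing the log joint density at `μₙ` with its value at `θ0` and completing squares gives,
with `d = f μₙ - f θ0`, `Sₙ = ∑ (yᵢ - f θ0)` and `u = μₙ - mθ`,
  `sθ² (n d² - 2 d Sₙ) + σ² u² ≤ σ² (θ0 - mθ)²`.
Since `n d² - 2 d Sₙ ≥ -Sₙ² / n`, the prior term keeps `μₙ` in a fixed compact ball as long as
`Sₙ² / n` stays bounded, which by Chebyshev happens with probability close to one. On that ball,
continuity and identifiability give `|d| ≥ δ > 0` whenever `|μₙ - θ0| ≥ ε`, and then the
inequality forces `|Sₙ| ≥ n δ / 4`, an event of probability `O(1 / n)`.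
-/

open MeasureTheory ProbabilityTheory Filter Finset Real Topology

theorem log_gaussianPDFReal (m : ℝ) (v : NNReal) (x : ℝ) :
    log (gaussianPDFReal m v x) = -log √(2 * π * v) - (x - m) ^ 2 / (2 * v) := by
  rcases eq_or_ne v 0 with rfl | hv
  · simp
  have hc : (√(2 * π * v))⁻¹ ≠ 0 := by positivity
  rw [gaussianPDFReal, log_mul hc (exp_ne_zero _), log_inv, log_exp]
  ring

theorem sum_sub_sq_eq (n : ℕ) (x : ℕ → ℝ) (a b : ℝ) :
    ∑ i ∈ range n, (x i - b) ^ 2 = ∑ i ∈ range n, (x i - a) ^ 2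
      - 2 * (b - a) * ∑ i ∈ range n, (x i - a) + n * (b - a) ^ 2 := by
  have hsq : ∀ i ∈ range n,
      (x i - b) ^ 2 = (x i - a) ^ 2 - 2 * (b - a) * (x i - a) + (b - a) ^ 2 :=
    fun i _ => by ring
  rw [sum_congr rfl hsq, sum_add_distrib, sum_sub_distrib, ← mul_sum, sum_const, card_range,
    nsmul_eq_mul]

theorem penalized_bound_of_log_joint_le {v w : NNReal} (hv : v ≠ 0) (hw : w ≠ 0)
    {mθ θ₀ θ a b : ℝ} (n : ℕ) (x : ℕ → ℝ)
    (h : ∑ i ∈ range n, log (gaussianPDFReal a v (x i)) + log (gaussianPDFReal mθ w θ₀)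
      ≤ ∑ i ∈ range n, log (gaussianPDFReal b v (x i)) + log (gaussianPDFReal mθ w θ)) :
    w * (n * (b - a) ^ 2 - 2 * (b - a) * ∑ i ∈ range n, (x i - a)) + v * (θ - mθ) ^ 2
      ≤ v * (θ₀ - mθ) ^ 2 := by
  simp only [log_gaussianPDFReal, sum_sub_distrib, ← sum_div] at h
  rw [sum_sub_sq_eq n x a b] at h
  have h' := mul_le_mul_of_nonneg_right h (by positivity : (0 : ℝ) ≤ 2 * v * w)
  field_simp at h'
  linarith

section PenalizedBound

variable {v w n d S u C : ℝ}

theorem sq_le_add_of_penalized_bound (hw : 0 ≤ w) (hn : 0 < n)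
    (hkey : w * (n * d ^ 2 - 2 * d * S) + v * u ^ 2 ≤ C) :
    v * u ^ 2 ≤ C + w * (S ^ 2 / n) := by
  have hsq : -(S ^ 2 / n) ≤ n * d ^ 2 - 2 * d * S := by
    rw [neg_le_iff_add_nonneg, ← mul_le_mul_iff_of_pos_left hn, mul_zero]
    field_simp
    nlinarith [sq_nonneg (n * d - S)]
  nlinarith [mul_le_mul_of_nonneg_left hsq hw]

theorem mul_sq_le_of_penalized_bound {δ : ℝ} (hw : 0 ≤ w) (hδ : 0 < δ)
    (hkey : w * (n * d ^ 2 - 2 * d * S) ≤ C) (hd : δ ≤ |d|) (hS : |S| < n * δ / 4) :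
    n * δ ^ 2 * w ≤ 2 * C := by
  have hn : 0 < n := by nlinarith [abs_nonneg S]
  have hδd : δ ^ 2 ≤ d ^ 2 := by simpa only [sq_abs] using pow_le_pow_left₀ hδ.le hd 2
  have hdS : 2 * d * S ≤ n * d ^ 2 / 2 := by
    calc 2 * d * S ≤ 2 * |d| * |S| := by
          have := le_abs_self (d * S)
          rw [abs_mul] at this
          linarith
      _ ≤ 2 * |d| * (n * δ / 4) := by gcongr
      _ ≤ n * d ^ 2 / 2 := by
          nlinarith [mul_le_mul_of_nonneg_left (mul_le_mul_of_nonneg_left hd (abs_nonneg d)) hn.le,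
            abs_mul_abs_self d]
  nlinarith [mul_le_mul_of_nonneg_left (mul_le_mul_of_nonneg_left hδd hn.le) hw]

theorem sqrt_le_abs_or_le_abs_of_penalized_bound {K δ : ℝ} (hv : 0 < v) (hw : 0 ≤ w)
    (hn : 0 < n) (hδ : 0 < δ) (hkey : w * (n * d ^ 2 - 2 * d * S) + v * u ^ 2 ≤ C)
    (hfar : u ^ 2 ≤ (C + w * K) / v → δ ≤ |d|) (hlarge : 2 * C < n * δ ^ 2 * w) :
    √(n * K) ≤ |S| ∨ n * δ / 4 ≤ |S| := by
  by_contra! ⟨hSK, hSδ⟩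
  have hS2 : S ^ 2 / n < K := by
    rw [div_lt_iff₀ hn, ← sq_abs, mul_comm]
    exact (lt_sqrt (abs_nonneg S)).1 hSK
  have hu : u ^ 2 ≤ (C + w * K) / v := by
    rw [le_div_iff₀ hv, mul_comm]
    exact (sq_le_add_of_penalized_bound hw hn hkey).trans (by gcongr)
  have hvu : 0 ≤ v * u ^ 2 := by positivity
  exact (mul_sq_le_of_penalized_bound hw hδ (by linarith) (hfar hu) hSδ).not_gt hlarge

end PenalizedBound

theorem IsCompact.exists_pos_forall_le_dist_apply {X Y : Type*} [PseudoMetricSpace X]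
    [MetricSpace Y] {s : Set X} (hs : IsCompact s) {f : X → Y} (hf : Continuous f) {x₀ : X}
    (hident : ∀ x, x ≠ x₀ → f x ≠ f x₀) {ε : ℝ} (hε : 0 < ε) :
    ∃ δ > 0, ∀ x ∈ s, ε ≤ dist x x₀ → δ ≤ dist (f x) (f x₀) := by
  have hK : IsCompact (s ∩ {x | ε ≤ dist x x₀}) :=
    hs.inter_right (isClosed_le continuous_const (continuous_id.dist continuous_const))
  have hpos : ∀ x ∈ s ∩ {x | ε ≤ dist x x₀}, 0 < dist (f x) (f x₀) := fun x hx =>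
    dist_pos.2 (hident x fun h => by simp [h] at hx; linarith [hx.2])
  obtain ⟨δ, hδ, hle⟩ := hK.exists_forall_le' (by fun_prop) hpos
  exact ⟨δ, hδ, fun x hx hxε => hle x ⟨hx, hxε⟩⟩

section Chebyshev

variable {Ω : Type*} [MeasurableSpace Ω] {P : Measure Ω}

theorem ProbabilityTheory.HasLaw.memLp {X : Ω → ℝ} {μ : Measure ℝ} (hX : HasLaw X μ P)
    {p : ENNReal} (h : MemLp id p μ) : MemLp X p P := by
  rw [← hX.map_eq] at h
  exact (memLp_map_measure_iff aestronglyMeasurable_id hX.aemeasurable).1 h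

theorem measure_le_of_subset_abs_ge_union {S : Ω → ℝ} {n v K δ : ℝ} (hn : 0 < n) (hK : 0 < K)
    (hδ : 0 < δ) (hcheb : ∀ t, 0 < t → P {ω | t ≤ |S ω|} ≤ ENNReal.ofReal (n * v / t ^ 2))
    {A : Set Ω} (hA : A ⊆ {ω | √(n * K) ≤ |S ω|} ∪ {ω | n * δ / 4 ≤ |S ω|}) :
    P A ≤ ENNReal.ofReal (v / K) + ENNReal.ofReal (16 * v / δ ^ 2 / n) := by
  calc P A ≤ P {ω | √(n * K) ≤ |S ω|} + P {ω | n * δ / 4 ≤ |S ω|} :=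
        (measure_mono hA).trans (measure_union_le _ _)
    _ ≤ _ := by
      gcongr
      · refine (hcheb _ (by positivity)).trans_eq ?_
        rw [sq_sqrt (by positivity)]
        field_simp
      · refine (hcheb _ (by positivity)).trans_eq ?_
        field_simp
        norm_num

variable [IsFiniteMeasure P]

theorem measure_abs_sum_sub_ge_le {X : ℕ → Ω → ℝ}
    (hindep : Pairwise fun i j => IndepFun (X i) (X j) P) (hL2 : ∀ i, MemLp (X i) 2 P)
    {m v : ℝ} (hmean : ∀ i, P[X i] = m) (hvar : ∀ i, Var[X i; P] = v) (n : ℕ) {t : ℝ}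
    (ht : 0 < t) :
    P {ω | t ≤ |∑ i ∈ range n, (X i ω - m)|} ≤ ENNReal.ofReal (n * v / t ^ 2) := by
  have hsum : MemLp (∑ i ∈ range n, X i) 2 P := memLp_finsetSum' _ fun i _ => hL2 i
  have hmean_sum : P[∑ i ∈ range n, X i] = n * m := by
    simp only [Finset.sum_apply]
    rw [integral_finsetSum _ fun i _ => (hL2 i).integrable one_le_two]
    simp [hmean]
  have hvar_sum : Var[∑ i ∈ range n, X i; P] = n * v := by
    rw [IndepFun.variance_sum (fun i _ => hL2 i) fun i _ j _ hij => hindep hij]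
    simp [hvar]
  convert meas_ge_le_variance_div_sq hsum ht using 4 with ω
  · rw [hmean_sum, Finset.sum_apply, sum_sub_distrib]
    simp
  · exact hvar_sum.symm

theorem measure_abs_sum_sub_ge_le_of_hasLaw_gaussianReal {X : ℕ → Ω → ℝ}
    (hindep : Pairwise fun i j => IndepFun (X i) (X j) P) {m : ℝ} {v : NNReal}
    (hlaw : ∀ i, HasLaw (X i) (gaussianReal m v) P) (n : ℕ) {t : ℝ} (ht : 0 < t) :
    P {ω | t ≤ |∑ i ∈ range n, (X i ω - m)|} ≤ ENNReal.ofReal (n * v / t ^ 2) :=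
  measure_abs_sum_sub_ge_le hindep (fun i => (hlaw i).memLp (memLp_id_gaussianReal 2))
    (fun i => (hlaw i).integral_eq.trans integral_id_gaussianReal)
    (fun i => (hlaw i).variance_eq.trans variance_id_gaussianReal) n ht

end Chebyshev

theorem tendsto_zero_of_forall_eventually_le_add {α : Type*} {l : Filter α} {u : α → ENNReal}
    (h : ∀ η : ℝ, 0 < η → ∃ w : α → ENNReal, Tendsto w l (𝓝 0) ∧
      ∀ᶠ a in l, u a ≤ ENNReal.ofReal η + w a) :
    Tendsto u l (𝓝 0) := by
  refine ENNReal.tendsto_nhds_zero.2 fun ε hε => ?_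
  obtain ⟨η, -, hη, hηε⟩ := ENNReal.lt_iff_exists_real_btwn.1 (ENNReal.half_pos hε.ne')
  obtain ⟨w, hw, hu⟩ := h η (ENNReal.ofReal_pos.1 hη)
  filter_upwards [hu, ENNReal.tendsto_nhds_zero.1 hw _ (ENNReal.half_pos hε.ne')] with a hua hwa
  calc u a ≤ ENNReal.ofReal η + w a := hua
    _ ≤ ε / 2 + ε / 2 := add_le_add hηε.le hwa
    _ = ε := ENNReal.add_halves ε

/-- Consistency of the MAP (= single-parameter variational Laplace) estimator
in the nonlinear transform model `p(y|θ) = N(y; f(θ), σ²)` with Gaussian prior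
`N(θ; m_θ, s_θ²)`: if `f` is continuous and identifiable (`θ ≠ θ0 → f θ ≠ f θ0`), then any
sequence of maximizers `μₙ` of the log joint density converges in probability to `θ0`. -/
theorem single_param_map_consistent
    {Ω : Type*} [MeasurableSpace Ω] (P : Measure Ω) [IsProbabilityMeasure P]
    (f : ℝ → ℝ) (hf : Continuous f)
    (θ0 σ : ℝ) (hσ : 0 < σ)
    (hident : ∀ θ, θ ≠ θ0 → f θ ≠ f θ0)
    (mθ sθ : ℝ) (hsθ : 0 < sθ)
    -- i.i.d. observations with law `N(f(θ0), σ²)`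
    (y : ℕ → Ω → ℝ) (hmeas : ∀ i, Measurable (y i))
    (hindep : iIndepFun y P)
    (hlaw : ∀ i, Measure.map (y i) P = gaussianReal (f θ0) ⟨σ ^ 2, sq_nonneg σ⟩)
    -- `μₙ` maximizes `θ ↦ ∑ᵢ ln p(yᵢ|θ) + ln p(θ)`
    (μn : ℕ → Ω → ℝ)
    (hmax : ∀ n ω θ,
      (∑ i ∈ Finset.range n,
          Real.log (gaussianPDFReal (f θ) ⟨σ ^ 2, sq_nonneg σ⟩ (y i ω)))
        + Real.log (gaussianPDFReal mθ ⟨sθ ^ 2, sq_nonneg sθ⟩ θ)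
      ≤ (∑ i ∈ Finset.range n,
          Real.log (gaussianPDFReal (f (μn n ω)) ⟨σ ^ 2, sq_nonneg σ⟩ (y i ω)))
        + Real.log (gaussianPDFReal mθ ⟨sθ ^ 2, sq_nonneg sθ⟩ (μn n ω))) :
    -- conclusion: `μₙ → θ0` in probability
    ∀ ε > 0, Tendsto (fun n => P {ω | ε < |μn n ω - θ0|}) atTop (nhds 0) := by
  intro ε hε
  have hv : (⟨σ ^ 2, sq_nonneg σ⟩ : NNReal) ≠ 0 := by simp [hσ.ne']
  have hw : (⟨sθ ^ 2, sq_nonneg sθ⟩ : NNReal) ≠ 0 := by simp [hsθ.ne']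
  have hcheb (n : ℕ) (t : ℝ) (ht : 0 < t) : P {ω | t ≤ |∑ i ∈ range n, (y i ω - f θ0)|}
      ≤ ENNReal.ofReal (n * σ ^ 2 / t ^ 2) :=
    measure_abs_sum_sub_ge_le_of_hasLaw_gaussianReal (fun i j hij => hindep.indepFun hij)
      (fun i => ⟨(hmeas i).aemeasurable, hlaw i⟩) n ht
  have hkey (n : ℕ) (ω : Ω) : sθ ^ 2 * (n * (f (μn n ω) - f θ0) ^ 2
        - 2 * (f (μn n ω) - f θ0) * ∑ i ∈ range n, (y i ω - f θ0))
      + σ ^ 2 * (μn n ω - mθ) ^ 2 ≤ σ ^ 2 * (θ0 - mθ) ^ 2 :=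
    penalized_bound_of_log_joint_le hv hw n _ (hmax n ω θ0)
  refine tendsto_zero_of_forall_eventually_le_add fun η hη => ?_
  set C := σ ^ 2 * (θ0 - mθ) ^ 2
  -- `μₙ` stays in this ball whenever `Sₙ² / n < σ² / η`, an event of probability `≥ 1 - η`
  obtain ⟨δ, hδ, hsep⟩ := (isCompact_closedBall mθ √((C + sθ ^ 2 * (σ ^ 2 / η)) / σ ^ 2))
    |>.exists_pos_forall_le_dist_apply hf hident hε
  refine ⟨fun n => ENNReal.ofReal (16 * σ ^ 2 / δ ^ 2 / n), ?_, ?_⟩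
  · simpa using ENNReal.tendsto_ofReal (tendsto_const_div_atTop_nhds_zero_nat _)
  filter_upwards [tendsto_natCast_atTop_atTop.eventually_gt_atTop (0 : ℝ),
    tendsto_natCast_atTop_atTop.eventually_gt_atTop (2 * C / (δ ^ 2 * sθ ^ 2))] with n hn hlarge
  refine (measure_le_of_subset_abs_ge_union hn (by positivity) hδ (hcheb n) fun ω hω =>
    sqrt_le_abs_or_le_abs_of_penalized_bound (K := σ ^ 2 / η) (by positivity) (by positivity)
      hn hδ (hkey n ω)
      (fun hu => hsep _ (by rw [Metric.mem_closedBall, dist_eq]; exact abs_le_sqrt hu) hω.le)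
      (by linarith [(div_lt_iff₀ (by positivity)).1 hlarge])).trans_eq ?_
  rw [div_div_cancel₀ (by positivity : σ ^ 2 ≠ 0)]
end

section
/- Let Θ ⊂ ℝ^d with θ0 an interior point, and let y_1,…,y_n be i.i.d. with density p(·|θ0). Suppose the estimator sequence μ^{(n)} ∈ interior(Θ) satisfies (1/n)·Σ_{i=1}^n ∇_θ ln p(y_i|θ)|_{θ=μ^{(n)}} = R^{(n)} with R^{(n)} → 0 in probability. Assume further: (i) sup_{θ∈Θ} ‖ (1/n)·Σ_{i=1}^n ∇_θ ln p(y_i|θ) + ∇_θ KL(p(·|θ0) ‖ p(·|θ)) ‖ → 0 in probability; (ii) for every ε > 0, inf_{θ : ‖θ−θ0‖ ≥ ε} ‖ ∇_θ KL(p(·|θ0) ‖ p(·|θ)) ‖ > 0; (iii) ∇_θ ∫ ln p(y|θ) p(y|θ0) dy = ∫ ∇_θ ln p(y|θ) p(y|θ0) dy for all θ ∈ Θ. Then μ^{(n)} → θ0 in probability. -/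
open MeasureTheory ProbabilityTheory Filter

/-! The argument is deterministic up to a union bound. Outside the `ε`-ball around `θ0` the
gradient of the Kullback–Leibler divergence has norm at least some `c > 0`, and at `μ⁽ⁿ⁾` this
gradient is the difference of the normalized score (which is `R⁽ⁿ⁾`) and the normalized score plus
the gradient. Hence `‖μ⁽ⁿ⁾ - θ0‖ > ε` forces `‖R⁽ⁿ⁾‖ > c/3` or a uniform deviation `> c/3` on `Θ`,
and both events have vanishing probability. -/

theorem lt_norm_or_lt_norm_add_of_add_lt_norm {E : Type*} [SeminormedAddCommGroup E]
    {a b : ℝ} {s g : E} (h : a + b < ‖g‖) : a < ‖s‖ ∨ b < ‖s + g‖ := by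
  by_contra! hle
  have : ‖g‖ ≤ ‖s + g‖ + ‖s‖ := by
    simpa using norm_sub_le (s + g) s
  linarith [hle.1, hle.2]

theorem tendsto_measure_zero_of_subset_union {Ω ι : Type*} [MeasurableSpace Ω] {μ : Measure Ω}
    {l : Filter ι} {A B C : ι → Set Ω} (hB : Tendsto (fun i => μ (B i)) l (nhds 0))
    (hC : Tendsto (fun i => μ (C i)) l (nhds 0)) (hsub : ∀ i, A i ⊆ B i ∪ C i) :
    Tendsto (fun i => μ (A i)) l (nhds 0) := by
  have hBC : Tendsto (fun i => μ (B i) + μ (C i)) l (nhds 0) := by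
    simpa using hB.add hC
  exact tendsto_of_tendsto_of_tendsto_of_le_of_le tendsto_const_nhds hBC (fun _ => zero_le)
    fun i => (measure_mono (hsub i)).trans (measure_union_le _ _)

theorem tendsto_measure_dist_gt_of_approx_zero {Ω ι α E : Type*} [MeasurableSpace Ω]
    [PseudoMetricSpace α] [SeminormedAddCommGroup E] {μ : Measure Ω} {l : Filter ι}
    {Θ : Set α} {θ0 : α} {F : ι → Ω → α → E} {G : α → E} {θhat : ι → Ω → α}
    (hmem : ∀ i ω, θhat i ω ∈ Θ)
    (hnear : ∀ ε > 0, Tendsto (fun i => μ {ω | ε < ‖F i ω (θhat i ω)‖}) l (nhds 0))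
    (hunif : ∀ ε > 0, Tendsto (fun i => μ {ω | ∃ θ ∈ Θ, ε < ‖F i ω θ + G θ‖}) l (nhds 0))
    (hsep : ∀ ε > 0, ∃ c > 0, ∀ θ ∈ Θ, ε ≤ dist θ θ0 → c ≤ ‖G θ‖) :
    ∀ ε > 0, Tendsto (fun i => μ {ω | ε < dist (θhat i ω) θ0}) l (nhds 0) := by
  intro ε hε
  obtain ⟨c, hc, hG⟩ := hsep ε hε
  refine tendsto_measure_zero_of_subset_union (hnear (c / 3) (by positivity))
    (hunif (c / 3) (by positivity)) fun i ω hω => ?_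
  have hcG : c / 3 + c / 3 < ‖G (θhat i ω)‖ := by
    linarith [hG _ (hmem i ω) hω.le]
  exact (lt_norm_or_lt_norm_add_of_add_lt_norm hcG).imp id fun h => ⟨_, hmem i ω, h⟩

theorem vl_near_zero_score_consistent_general
    {d : ℕ}
    {Ω : Type*} [MeasurableSpace Ω] (P : Measure Ω)
    (Θ : Set (EuclideanSpace ℝ (Fin d))) (θ0 : EuclideanSpace ℝ (Fin d))
    -- i.i.d. observations with density `p(·|θ0)` with respect to Lebesgue measure
    (y : ℕ → Ω → ℝ)
    -- the score `∇_θ ln p(y|θ)` and the Kullback–Leibler divergence `θ ↦ KL(p(·|θ0) ‖ p(·|θ))`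
    (score : EuclideanSpace ℝ (Fin d) → ℝ → EuclideanSpace ℝ (Fin d))
    (D : EuclideanSpace ℝ (Fin d) → ℝ)
    -- the estimators lie in the interior of `Θ`
    (μn : ℕ → Ω → EuclideanSpace ℝ (Fin d))
    (hin : ∀ n ω, μn n ω ∈ interior Θ)
    -- `(1/n)·∑ᵢ score(μ⁽ⁿ⁾)(yᵢ) = R⁽ⁿ⁾ → 0` in probability
    (hnear : ∀ ε > 0, Tendsto
      (fun (n : ℕ) => P {ω | ε <
        ‖(n : ℝ)⁻¹ • ∑ i ∈ Finset.range n, score (μn n ω) (y i ω)‖})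
      atTop (nhds 0))
    -- (i) uniform convergence in probability of the normalized score to `−∇KL`
    (hunif : ∀ ε > 0, Tendsto
      (fun (n : ℕ) => P {ω | ∃ θ ∈ Θ, ε <
        ‖(n : ℝ)⁻¹ • ∑ i ∈ Finset.range n, score θ (y i ω) + gradient D θ‖})
      atTop (nhds 0))
    -- (ii) `‖∇KL‖` is bounded away from `0` outside every ball around `θ0`
    (hsep : ∀ ε > 0, ∃ c > 0, ∀ θ ∈ Θ, ε ≤ ‖θ - θ0‖ → c ≤ ‖gradient D θ‖) :
    -- conclusion: `μ⁽ⁿ⁾ → θ0` in probability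
    ∀ ε > 0, Tendsto (fun n => P {ω | ε < ‖μn n ω - θ0‖}) atTop (nhds 0) := by
  simp_rw [← dist_eq_norm] at hsep ⊢
  exact tendsto_measure_dist_gt_of_approx_zero (fun n ω => interior_subset (hin n ω))
    hnear hunif hsep

/-- Consistency of near-zeroes of the normalized score (as produced by
variational Laplace fixed points): with `y₁, …, yₙ` i.i.d. with density `p(·|θ0)`, `θ0` an
interior point of `Θ ⊂ ℝ^d`, if `μ⁽ⁿ⁾ ∈ interior Θ` satisfies
`(1/n)·∑ᵢ ∇_θ ln p(yᵢ|θ)|_{μ⁽ⁿ⁾} = R⁽ⁿ⁾ → 0` in probability, the normalized score converges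
uniformly in probability to `−∇_θ KL(p(·|θ0) ‖ p(·|θ))`, the gradient of the
Kullback–Leibler divergence is bounded away from `0` outside every ball around `θ0`, and
differentiation and integration may be interchanged, then `μ⁽ⁿ⁾ → θ0` in probability. -/
theorem vl_near_zero_score_consistent
    {d : ℕ}
    {Ω : Type*} [MeasurableSpace Ω] (P : Measure Ω) [IsProbabilityMeasure P]
    (Θ : Set (EuclideanSpace ℝ (Fin d))) (θ0 : EuclideanSpace ℝ (Fin d))
    (hθ0 : θ0 ∈ interior Θ)
    (p : EuclideanSpace ℝ (Fin d) → ℝ → ℝ)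
    -- i.i.d. observations with density `p(·|θ0)` with respect to Lebesgue measure
    (y : ℕ → Ω → ℝ) (hmeas : ∀ i, Measurable (y i))
    (hindep : iIndepFun y P)
    (hlaw : ∀ i, Measure.map (y i) P
      = volume.withDensity fun x => ENNReal.ofReal (p θ0 x))
    -- the score `∇_θ ln p(y|θ)` and the Kullback–Leibler divergence `θ ↦ KL(p(·|θ0) ‖ p(·|θ))`
    (score : EuclideanSpace ℝ (Fin d) → ℝ → EuclideanSpace ℝ (Fin d))
    (hscore : ∀ θ x, score θ x = gradient (fun t => Real.log (p t x)) θ)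
    (D : EuclideanSpace ℝ (Fin d) → ℝ)
    (hD : ∀ θ, D θ = ∫ x, p θ0 x * Real.log (p θ0 x / p θ x))
    -- the estimators lie in the interior of `Θ`
    (μn : ℕ → Ω → EuclideanSpace ℝ (Fin d))
    (hin : ∀ n ω, μn n ω ∈ interior Θ)
    -- `(1/n)·∑ᵢ score(μ⁽ⁿ⁾)(yᵢ) = R⁽ⁿ⁾ → 0` in probability
    (hnear : ∀ ε > 0, Tendsto
      (fun (n : ℕ) => P {ω | ε <
        ‖(n : ℝ)⁻¹ • ∑ i ∈ Finset.range n, score (μn n ω) (y i ω)‖})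
      atTop (nhds 0))
    -- (i) uniform convergence in probability of the normalized score to `−∇KL`
    (hunif : ∀ ε > 0, Tendsto
      (fun (n : ℕ) => P {ω | ∃ θ ∈ Θ, ε <
        ‖(n : ℝ)⁻¹ • ∑ i ∈ Finset.range n, score θ (y i ω) + gradient D θ‖})
      atTop (nhds 0))
    -- (ii) `‖∇KL‖` is bounded away from `0` outside every ball around `θ0`
    (hsep : ∀ ε > 0, ∃ c > 0, ∀ θ ∈ Θ, ε ≤ ‖θ - θ0‖ → c ≤ ‖gradient D θ‖)
    -- (iii) interchange of differentiation and integration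
    (hinter : ∀ θ ∈ Θ,
      gradient (fun t => ∫ x, Real.log (p t x) * p θ0 x) θ = ∫ x, p θ0 x • score θ x) :
    -- conclusion: `μ⁽ⁿ⁾ → θ0` in probability
    ∀ ε > 0, Tendsto (fun n => P {ω | ε < ‖μn n ω - θ0‖}) atTop (nhds 0) :=
  vl_near_zero_score_consistent_general P Θ θ0 y score D μn hin hnear hunif hsep
end

section
/- Let Σ₂ be a symmetric positive definite p×p real matrix and μ₂ ∈ ℝ^p. Consider the function F(μ₁, σ) = (1/2)·[ ln det Σ₂ − Σ_{j=1}^p ln σ_j − p + (μ₁ − μ₂)ᵀ Σ₂^{-1} (μ₁ − μ₂) + Σ_{j=1}^p (Σ₂^{-1})_{jj}·σ_j ] over μ₁ ∈ ℝ^p and σ ∈ (0,∞)^p, which equals the Kullback–Leibler divergence KL( N(μ₁, diag(σ₁,…,σ_p)) ‖ N(μ₂, Σ₂) ) between the Gaussian with mean μ₁ and diagonal covariance diag(σ) and the Gaussian with mean μ₂ and covariance Σ₂. Then F has a unique minimizer, attained at μ₁ = μ₂ and σ_j = 1/(Σ₂^{-1})_{jj} for j = 1,…,p. -/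
/-!
Splitting the objective as `F μ₁ σ = ½ (log det Σ₂ - p + q(μ₁ - μ₂) + ∑ⱼ (aⱼ σⱼ - log σⱼ))`
with `q` the quadratic form of `A = Σ₂⁻¹` and `aⱼ = Aⱼⱼ`, the two variable parts decouple.
`A` is positive definite, so `q ≥ 0` with equality only at `μ₁ = μ₂`, and `aⱼ > 0`;
`log x ≤ x - 1` at `x = aⱼ σⱼ` gives `aⱼ σⱼ - log σⱼ ≥ 1 + log aⱼ`, with equality only at
`σⱼ = aⱼ⁻¹`.
-/

open Matrix Finset

namespace Real

theorem one_add_log_le_mul_sub_log {a s : ℝ} (ha : 0 < a) (hs : 0 < s) :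
    1 + log a ≤ a * s - log s := by
  have h := log_le_sub_one_of_pos (mul_pos ha hs)
  rw [log_mul ha.ne' hs.ne'] at h
  linarith

theorem mul_sub_log_eq_one_add_log_iff {a s : ℝ} (ha : 0 < a) (hs : 0 < s) :
    a * s - log s = 1 + log a ↔ s = a⁻¹ := by
  constructor
  · intro h
    by_contra hne
    have hx : a * s ≠ 1 := fun h1 => hne (eq_inv_of_mul_eq_one_right h1)
    have := log_lt_sub_one_of_pos (mul_pos ha hs) hx
    rw [log_mul ha.ne' hs.ne'] at this
    linarith
  · rintro rfl
    rw [mul_inv_cancel₀ ha.ne', log_inv]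
    ring

end Real

section SumMulSubLog

variable {ι : Type*} [Fintype ι] {a σ : ι → ℝ}

theorem sum_one_add_log_le_sum_mul_sub_log (ha : ∀ j, 0 < a j) (hσ : ∀ j, 0 < σ j) :
    ∑ j, (1 + Real.log (a j)) ≤ ∑ j, (a j * σ j - Real.log (σ j)) :=
  sum_le_sum fun j _ => Real.one_add_log_le_mul_sub_log (ha j) (hσ j)

theorem sum_mul_sub_log_eq_sum_one_add_log_iff (ha : ∀ j, 0 < a j) (hσ : ∀ j, 0 < σ j) :
    ∑ j, (a j * σ j - Real.log (σ j)) = ∑ j, (1 + Real.log (a j)) ↔ σ = fun j => (a j)⁻¹ := by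
  rw [eq_comm, sum_eq_sum_iff_of_le fun j _ => Real.one_add_log_le_mul_sub_log (ha j) (hσ j),
    funext_iff]
  simp only [mem_univ, forall_const]
  exact forall_congr' fun j => eq_comm.trans (Real.mul_sub_log_eq_one_add_log_iff (ha j) (hσ j))

end SumMulSubLog

theorem Matrix.PosDef.dotProduct_mulVec_eq_zero_iff {n R : Type*} [Fintype n] [Ring R]
    [PartialOrder R] [StarRing R] {M : Matrix n n R} (hM : M.PosDef) {x : n → R} :
    star x ⬝ᵥ M *ᵥ x = 0 ↔ x = 0 :=
  ⟨fun h => by_contra fun hx => (hM.dotProduct_mulVec_pos hx).ne' h, fun h => by simp [h]⟩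

/-- The Kullback–Leibler divergence
`F(μ₁, σ) = KL( N(μ₁, diag σ) ‖ N(μ₂, Σ₂) )`, written in closed form, has a unique minimizer
over `μ₁ ∈ ℝᵖ`, `σ ∈ (0,∞)ᵖ`, attained at `μ₁ = μ₂` and `σⱼ = 1/(Σ₂⁻¹)ⱼⱼ`. -/
theorem meanfield_gaussian_kl_unique_minimizer
    {p : ℕ} (S : Matrix (Fin p) (Fin p) ℝ) (hS : S.PosDef) (μ2 : Fin p → ℝ)
    (F : (Fin p → ℝ) → (Fin p → ℝ) → ℝ)
    (hF : ∀ μ1 σ, F μ1 σ =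
      (1 / 2) * (Real.log S.det - (∑ j, Real.log (σ j)) - (p : ℝ)
        + (μ1 - μ2) ⬝ᵥ S⁻¹.mulVec (μ1 - μ2)
        + ∑ j, S⁻¹ j j * σ j)) :
    (∀ μ1 σ, (∀ j, 0 < σ j) → F μ2 (fun j => (S⁻¹ j j)⁻¹) ≤ F μ1 σ) ∧
    (∀ μ1 σ, (∀ j, 0 < σ j) → F μ1 σ = F μ2 (fun j => (S⁻¹ j j)⁻¹) →
      μ1 = μ2 ∧ σ = fun j => (S⁻¹ j j)⁻¹) := by
  set a : Fin p → ℝ := fun j => S⁻¹ j j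
  have ha : ∀ j, 0 < a j := fun _ => hS.inv.diag_pos
  have hsplit : ∀ μ1 σ, F μ1 σ = (1 / 2) * (Real.log S.det - p
      + ((μ1 - μ2) ⬝ᵥ S⁻¹ *ᵥ (μ1 - μ2) + ∑ j, (a j * σ j - Real.log (σ j)))) := by
    intro μ1 σ
    rw [hF, sum_sub_distrib]
    ring
  have hmin : F μ2 (fun j => (a j)⁻¹) =
      (1 / 2) * (Real.log S.det - p + (0 + ∑ j, (1 + Real.log (a j)))) := by
    rw [hsplit, sub_self, zero_dotProduct,
      (sum_mul_sub_log_eq_sum_one_add_log_iff ha fun j => inv_pos.2 (ha j)).2 rfl]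
  have hq : ∀ μ1, 0 ≤ (μ1 - μ2) ⬝ᵥ S⁻¹ *ᵥ (μ1 - μ2) := fun μ1 => by
    simpa using hS.inv.posSemidef.dotProduct_mulVec_nonneg (μ1 - μ2)
  refine ⟨fun μ1 σ hσ => ?_, fun μ1 σ hσ heq => ?_⟩
  · rw [hmin, hsplit]
    gcongr ?_ * (_ + ?_)
    exact add_le_add (hq μ1) (sum_one_add_log_le_sum_mul_sub_log ha hσ)
  · rw [hmin, hsplit, mul_right_inj' one_half_pos.ne', add_right_inj, eq_comm,
      add_eq_add_iff_eq_and_eq (hq μ1) (sum_one_add_log_le_sum_mul_sub_log ha hσ)] at heq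
    obtain ⟨hq0, hlog⟩ := heq
    refine ⟨sub_eq_zero.1 ?_, (sum_mul_sub_log_eq_sum_one_add_log_iff ha hσ).1 hlog.symm⟩
    exact hS.inv.dotProduct_mulVec_eq_zero_iff.1 (by simpa using hq0.symm)
end

section
/- Consider the model p(y|θ) = N(y; e^θ, 1) with prior p(θ) = N(θ; m, s²), s > 0, and a single observation y. Define L(μ) = y·e^μ − (1/2)·e^{2μ} − (μ − m)²/(2s²) (the log joint density up to an additive constant) and the evidence lower bound E(μ, v) = y·e^μ·e^{v/2} − (1/2)·e^{2μ}·e^{2v} − (μ − m)²/(2s²) − v/(2s²) + (1/2)·ln v (up to an additive constant), for μ ∈ ℝ and v > 0. Then for every y < 0 there exist no μ ∈ ℝ and v > 0 such that simultaneously ∂E/∂μ(μ, v) = y·e^μ·e^{v/2} − e^{2μ}·e^{2v} − (μ − m)/s² = 0 and L'(μ) = y·e^μ − e^{2μ} − (μ − m)/s² = 0. In particular, the maximum-a-posteriori estimate and the variational mean maximizing the evidence lower bound over Gaussian variational densities do not coincide in general. -/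
/-- In the model `p(y|θ) = N(y; e^θ, 1)` with prior `N(θ; m, s²)`, for a
single observation `y < 0` there are no `μ ∈ ℝ`, `v > 0` at which both the `μ`-derivative of
the evidence lower bound `E(μ,v)` and the derivative of the log joint density `L(μ)` vanish:
the MAP estimate and the variational (ELBO-maximizing) mean do not coincide. -/
theorem map_ne_variational_mean (m s y : ℝ) (hs : 0 < s) (hy : y < 0) :
    ¬ ∃ (μ v : ℝ), 0 < v ∧
      -- ∂E/∂μ (μ, v) = 0
      y * Real.exp μ * Real.exp (v / 2) - Real.exp (2 * μ) * Real.exp (2 * v)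
        - (μ - m) / s ^ 2 = 0 ∧
      -- L'(μ) = 0
      y * Real.exp μ - Real.exp (2 * μ) - (μ - m) / s ^ 2 = 0 := by
  rintro ⟨μ, v, hv, h1, h2⟩
  have h3 : y * Real.exp μ * (Real.exp (v / 2) - 1)
      - Real.exp (2 * μ) * (Real.exp (2 * v) - 1) = 0 := by linarith
  have e1 : 1 < Real.exp (v / 2) := by rw [Real.one_lt_exp_iff]; linarith
  have e2 : 1 < Real.exp (2 * v) := by rw [Real.one_lt_exp_iff]; linarith
  have p1 : 0 < Real.exp μ := Real.exp_pos _
  have p2 : 0 < Real.exp (2 * μ) := Real.exp_pos _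
  nlinarith [mul_pos p1 (sub_pos.mpr e1), mul_pos p2 (sub_pos.mpr e2)]
end

section
/- In the linear transform model, let (μ_θ^{(n)}, σ_θ^{(n)}, μ_λ^{(n)}, σ_λ^{(n)}) be a sequence of variational Laplace fixed points. Then: (i) deterministically, for every n, |μ_θ^{(n)}| ≤ |ȳ_n|/|a| + |m_θ| where ȳ_n = (1/n)Σᵢ yᵢ (this follows from the fixed-point formula for μ_θ using only σ_λ^{(n)} ≥ 0 and exp(μ_λ^{(n)}) > 0); and (ii) the sequence μ_λ^{(n)} is bounded in probability, i.e. μ_λ^{(n)} = O_P(1). -/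
/-!
For (i), the fixed-point formula writes `μ_θ` as a weighted average of `ȳ/a` and `m_θ`, with the
nonnegative weights `a²(1 + σ_λ/2)` and `exp μ_λ / (n s_θ²)`.

For (ii), put `S = Σ (yᵢ - a μ_θ)² = n (Q̄ - ȳ² + (ȳ - a μ_θ)²)` with `Q̄ = (1/n) Σ yᵢ²`. Since
`0 ≤ a² n σ_θ ≤ exp μ_λ`, the `μ_λ`-equation gives `S/n ≤ exp μ_λ` when `μ_λ ≤ m_λ` and
`exp μ_λ ≤ 2 S/n` when `μ_λ ≥ m_λ` and `n ≥ 2`. Hence `|μ_λ|` is bounded by a constant whenever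
`ȳ` and `Q̄` are bounded and the sample variance `Q̄ - ȳ²` is bounded away from `0`. By the strong
law of large numbers `(ȳ, Q̄) → (aθ₀, (aθ₀)² + exp λ₀)` almost surely, so this happens with
probability tending to one.
-/

open MeasureTheory ProbabilityTheory Filter

/-- A variational Laplace fixed point for the linear transform model
`p(y|θ,λ) = N(y; aθ, exp λ)` with Gaussian priors `N(m_θ, s_θ²)`, `N(m_λ, s_λ²)`,
for sample size `n` and sample `ys 0, …, ys (n-1)`. -/
def IsVLFixedPoint (a mθ sθ ml sl : ℝ) (n : ℕ) (ys : ℕ → ℝ)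
    (μθ σθ μl σl : ℝ) : Prop :=
  0 < σθ ∧ 0 < σl ∧
  μθ = (a * (1 + σl / 2) * ((∑ i ∈ Finset.range n, ys i) / n)
        + Real.exp μl * mθ / (n * sθ ^ 2))
      / (a ^ 2 * (1 + σl / 2) + Real.exp μl / (n * sθ ^ 2)) ∧
  σθ = Real.exp μl * sθ ^ 2 / (a ^ 2 * n * sθ ^ 2 + Real.exp μl) ∧
  Real.exp μl * (2 * (μl - ml) / sl ^ 2 + n)
    = (∑ i ∈ Finset.range n, (ys i - a * μθ) ^ 2) + a ^ 2 * n * σθ ∧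
  σl = 2 * Real.exp μl * sl ^ 2
      / ((∑ i ∈ Finset.range n, (ys i - a * μθ) ^ 2) * sl ^ 2 + 2 * Real.exp μl)


open Finset Real Topology
open scoped NNReal

lemma abs_weighted_div_le (a x m : ℝ) {t d : ℝ} (ht : 0 ≤ t) (hd : 0 ≤ d) :
    |(a * t * x + d * m) / (a ^ 2 * t + d)| ≤ |x| / |a| + |m| := by
  have hden : 0 ≤ a ^ 2 * t + d := by positivity
  have hx : |a| * |x| ≤ |x| / |a| * a ^ 2 := by
    rcases eq_or_ne a 0 with rfl | ha
    · simp
    · exact le_of_eq (by rw [← sq_abs]; field_simp)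
  rw [abs_div, abs_of_nonneg hden]
  refine div_le_of_le_mul₀ hden (by positivity) ?_
  calc |a * t * x + d * m| ≤ |a| * |x| * t + d * |m| := by
        refine (abs_add_le _ _).trans_eq ?_
        rw [abs_mul, abs_mul, abs_mul, abs_of_nonneg ht, abs_of_nonneg hd]; ring
    _ ≤ (|x| / |a| + |m|) * (a ^ 2 * t + d) := by
        nlinarith [mul_le_mul_of_nonneg_right hx ht, mul_nonneg (by positivity : 0 ≤ |x| / |a|) hd,
          mul_nonneg (mul_nonneg (sq_nonneg a) ht) (abs_nonneg m)]

lemma sum_range_sub_sq (ys : ℕ → ℝ) (n : ℕ) (c : ℝ) :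
    ∑ i ∈ range n, (ys i - c) ^ 2 = n * ((∑ i ∈ range n, ys i ^ 2) / n
      - ((∑ i ∈ range n, ys i) / n) ^ 2 + ((∑ i ∈ range n, ys i) / n - c) ^ 2) := by
  rcases Nat.eq_zero_or_pos n with rfl | hn
  · simp
  simp only [sub_sq, sum_add_distrib, sum_sub_distrib, ← sum_mul, ← mul_sum, sum_const,
    card_range, nsmul_eq_mul]
  field_simp
  ring

namespace IsVLFixedPoint

variable {a mθ sθ ml sl : ℝ} {n : ℕ} {ys : ℕ → ℝ} {μθ σθ μl σl : ℝ}

theorem abs_μθ_le (h : IsVLFixedPoint a mθ sθ ml sl n ys μθ σθ μl σl) :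
    |μθ| ≤ |(∑ i ∈ range n, ys i) / n| / |a| + |mθ| := by
  obtain ⟨-, hσl, hμθ, -⟩ := h
  rw [hμθ, mul_div_right_comm (exp μl)]
  exact abs_weighted_div_le _ _ _ (by positivity) (by positivity)

theorem abs_mean_sub_mul_μθ_le (h : IsVLFixedPoint a mθ sθ ml sl n ys μθ σθ μl σl) :
    |(∑ i ∈ range n, ys i) / n - a * μθ| ≤ 2 * |(∑ i ∈ range n, ys i) / n| + |a| * |mθ| := by
  set ybar := (∑ i ∈ range n, ys i) / n
  have hdiv : |a| * (|ybar| / |a|) ≤ |ybar| := by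
    rcases eq_or_ne a 0 with rfl | ha
    · simp
    · rw [mul_div_cancel₀ _ (abs_ne_zero.2 ha)]
  calc |ybar - a * μθ| ≤ |ybar| + |a| * |μθ| := (abs_sub _ _).trans_eq (by rw [abs_mul])
    _ ≤ |ybar| + |a| * (|ybar| / |a| + |mθ|) := by gcongr; exact h.abs_μθ_le
    _ ≤ 2 * |ybar| + |a| * |mθ| := by linarith [mul_add |a| (|ybar| / |a|) |mθ|]

theorem mul_σθ_le (h : IsVLFixedPoint a mθ sθ ml sl n ys μθ σθ μl σl) :
    a ^ 2 * n * σθ ≤ exp μl := by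
  obtain ⟨-, -, -, hσθ, -⟩ := h
  have hD : 0 < a ^ 2 * n * sθ ^ 2 + exp μl := by positivity
  rw [hσθ, mul_div_assoc', div_le_iff₀ hD]
  nlinarith [exp_pos μl]

theorem exp_μl_le (h : IsVLFixedPoint a mθ sθ ml sl n ys μθ σθ μl σl) (hn : 2 ≤ n)
    (hμl : ml ≤ μl) : exp μl ≤ 2 * ((∑ i ∈ range n, (ys i - a * μθ) ^ 2) / n) := by
  have hσθ := h.mul_σθ_le
  obtain ⟨-, -, -, -, heq, -⟩ := h
  have hn' : (2 : ℝ) ≤ n := by exact_mod_cast hn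
  have hpen : 0 ≤ 2 * (μl - ml) / sl ^ 2 := by have := sub_nonneg.2 hμl; positivity
  rw [mul_div_assoc', le_div_iff₀ (by positivity)]
  nlinarith [exp_pos μl, mul_nonneg (exp_pos μl).le hpen]

theorem le_exp_μl (h : IsVLFixedPoint a mθ sθ ml sl n ys μθ σθ μl σl) (hμl : μl ≤ ml) :
    (∑ i ∈ range n, (ys i - a * μθ) ^ 2) / n ≤ exp μl := by
  obtain ⟨hσθ, -, -, -, heq, -⟩ := h
  rcases Nat.eq_zero_or_pos n with rfl | hn
  · simpa using (exp_pos μl).le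
  have hpen : 2 * (μl - ml) / sl ^ 2 ≤ 0 :=
    div_nonpos_of_nonpos_of_nonneg (by linarith) (sq_nonneg sl)
  rw [div_le_iff₀ (by positivity)]
  nlinarith [exp_pos μl, mul_nonpos_of_nonneg_of_nonpos (exp_pos μl).le hpen,
    mul_nonneg (mul_nonneg (sq_nonneg a) (Nat.cast_nonneg n)) hσθ.le]

theorem abs_μl_le (h : IsVLFixedPoint a mθ sθ ml sl n ys μθ σθ μl σl) (hn : 2 ≤ n) {v K : ℝ}
    (hv : 0 < v) (hvS : v ≤ (∑ i ∈ range n, (ys i - a * μθ) ^ 2) / n)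
    (hSK : (∑ i ∈ range n, (ys i - a * μθ) ^ 2) / n ≤ K) :
    |μl| ≤ |ml| + |log v| + |log (2 * K)| := by
  have hml := abs_nonneg ml
  have hlogv := abs_nonneg (log v)
  have hlogK := abs_nonneg (log (2 * K))
  rw [abs_le]
  constructor
  · rcases le_total μl ml with hle | hle
    · have hlog := (log_le_iff_le_exp hv).2 (hvS.trans (h.le_exp_μl hle))
      linarith [neg_abs_le (log v)]
    · linarith [neg_abs_le ml]
  · rcases le_total ml μl with hle | hle
    · have hlog := (le_log_iff_exp_le (by linarith : 0 < 2 * K)).2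
        ((h.exp_μl_le hn hle).trans (by linarith))
      linarith [le_abs_self (log (2 * K))]
    · linarith [le_abs_self ml]

theorem abs_μl_le_of_moments (h : IsVLFixedPoint a mθ sθ ml sl n ys μθ σθ μl σl) (hn : 2 ≤ n)
    {R₁ R₂ v : ℝ} (hv : 0 < v) (hmean : |(∑ i ∈ range n, ys i) / n| ≤ R₁)
    (hsq : (∑ i ∈ range n, ys i ^ 2) / n ≤ R₂)
    (hvar : v ≤ (∑ i ∈ range n, ys i ^ 2) / n - ((∑ i ∈ range n, ys i) / n) ^ 2) :
    |μl| ≤ |ml| + |log v| + |log (2 * (R₂ + (2 * R₁ + |a| * |mθ|) ^ 2))| := by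
  have hn0 : (n : ℝ) ≠ 0 := by positivity
  have hdev : ((∑ i ∈ range n, ys i) / n - a * μθ) ^ 2 ≤ (2 * R₁ + |a| * |mθ|) ^ 2 := by
    rw [← sq_abs]
    exact pow_le_pow_left₀ (abs_nonneg _) (h.abs_mean_sub_mul_μθ_le.trans (by linarith)) 2
  refine h.abs_μl_le hn hv ?_ ?_ <;> rw [sum_range_sub_sq, mul_div_cancel_left₀ _ hn0]
  · linarith [sq_nonneg ((∑ i ∈ range n, ys i) / n - a * μθ)]
  · linarith [sq_nonneg ((∑ i ∈ range n, ys i) / n)]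

end IsVLFixedPoint

lemma integral_sq_gaussianReal (μ : ℝ) (v : ℝ≥0) :
    ∫ x, x ^ 2 ∂gaussianReal μ v = μ ^ 2 + v := by
  have := variance_eq_sub (memLp_id_gaussianReal (μ := μ) (v := v) 2)
  simp only [variance_id_gaussianReal, Pi.pow_apply, id_eq, integral_id_gaussianReal] at this
  linarith

section SampleMoments

variable {Ω : Type*} [MeasurableSpace Ω] {P : Measure Ω}

theorem ae_tendsto_average_comp {y : ℕ → Ω → ℝ} {ν : Measure ℝ} (hmeas : ∀ i, Measurable (y i))
    (hindep : iIndepFun y P) (hlaw : ∀ i, P.map (y i) = ν) {f : ℝ → ℝ} (hf : Measurable f)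
    (hfν : Integrable f ν) :
    ∀ᵐ ω ∂P, Tendsto (fun n : ℕ => (∑ i ∈ range n, f (y i ω)) / n) atTop (𝓝 (∫ x, f x ∂ν)) := by
  have hid : ∀ i, IdentDistrib (fun ω => f (y i ω)) (fun ω => f (y 0 ω)) P P := fun i =>
    IdentDistrib.comp ⟨(hmeas i).aemeasurable, (hmeas 0).aemeasurable, by rw [hlaw i, hlaw 0]⟩ hf
  have hint : Integrable (fun ω => f (y 0 ω)) P :=
    (integrable_map_measure hf.aestronglyMeasurable (hmeas 0).aemeasurable).1 (hlaw 0 ▸ hfν)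
  have hmean : ∫ ω, f (y 0 ω) ∂P = ∫ x, f x ∂ν := by
    rw [← hlaw 0, integral_map (hmeas 0).aemeasurable hf.aestronglyMeasurable]
  rw [← hmean]
  exact strong_law_ae_real _ hint (fun i j hij => (hindep.indepFun hij).comp hf hf) hid

theorem ae_tendsto_sampleMoments_of_gaussianReal {y : ℕ → Ω → ℝ} {μ : ℝ} {v : ℝ≥0}
    (hmeas : ∀ i, Measurable (y i)) (hindep : iIndepFun y P)
    (hlaw : ∀ i, P.map (y i) = gaussianReal μ v) :
    ∀ᵐ ω ∂P, Tendsto (fun n : ℕ => ((∑ i ∈ range n, y i ω) / n, (∑ i ∈ range n, y i ω ^ 2) / n))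
      atTop (𝓝 (μ, μ ^ 2 + v)) := by
  have h1 := ae_tendsto_average_comp (f := fun x => x) hmeas hindep hlaw measurable_id
    ((memLp_id_gaussianReal 2).integrable one_le_two)
  have h2 := ae_tendsto_average_comp (f := fun x => x ^ 2) hmeas hindep hlaw
    (measurable_id.pow_const 2) (memLp_id_gaussianReal 2).integrable_sq
  filter_upwards [h1, h2] with ω h1 h2
  rw [integral_id_gaussianReal] at h1
  rw [integral_sq_gaussianReal] at h2
  exact h1.prodMk_nhds h2

theorem tendsto_measure_preimage_compl_of_ae_tendsto [IsFiniteMeasure P] {E : Type*}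
    [PseudoMetricSpace E] {X : ℕ → Ω → E} (hX : ∀ n, AEStronglyMeasurable (X n) P) {c : E}
    (hlim : ∀ᵐ ω ∂P, Tendsto (fun n => X n ω) atTop (𝓝 c)) {U : Set E} (hU : U ∈ 𝓝 c) :
    Tendsto (fun n => P (X n ⁻¹' Uᶜ)) atTop (𝓝 0) := by
  obtain ⟨δ, hδ, hball⟩ := Metric.mem_nhds_iff.1 hU
  have hfar := tendstoInMeasure_iff_dist.1
    (tendstoInMeasure_of_tendsto_ae (g := fun _ => c) hX hlim) δ hδ
  refine tendsto_of_tendsto_of_tendsto_of_le_of_le tendsto_const_nhds hfar (fun _ => zero_le)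
    fun n => measure_mono fun ω hω => ?_
  by_contra hnear
  exact hω (hball (Metric.mem_ball.2 (not_le.1 hnear)))

end SampleMoments

theorem vl_means_bounded_general
    {Ω : Type*} [MeasurableSpace Ω] (P : Measure Ω) [IsProbabilityMeasure P]
    (a θ0 l0 mθ sθ ml sl : ℝ)
    -- i.i.d. observations with law `N(a·θ0, exp λ0)`
    (y : ℕ → Ω → ℝ) (hmeas : ∀ i, Measurable (y i))
    (hindep : iIndepFun y P)
    (hlaw : ∀ i, Measure.map (y i) P
      = gaussianReal (a * θ0) ⟨Real.exp l0, (Real.exp_pos l0).le⟩)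
    -- a sequence of variational Laplace fixed points
    (μθn σθn μln σln : ℕ → Ω → ℝ)
    (hfix : ∀ n ω, IsVLFixedPoint a mθ sθ ml sl n (fun i => y i ω)
      (μθn n ω) (σθn n ω) (μln n ω) (σln n ω)) :
    -- (i) deterministic bound on `μ_θ⁽ⁿ⁾`
    (∀ (n : ℕ) ω,
      |μθn n ω| ≤ |(∑ i ∈ Finset.range n, y i ω) / n| / |a| + |mθ|) ∧
    -- (ii) `μ_λ⁽ⁿ⁾` is bounded in probability
    (∀ ε > 0, ∃ M : ℝ, ∃ N : ℕ, ∀ n ≥ N,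
      P {ω | M < |μln n ω|} < ENNReal.ofReal ε) := by
  refine ⟨fun n ω => (hfix n ω).abs_μθ_le, fun ε hε => ?_⟩
  set m := a * θ0
  set v := exp l0
  let U : Set (ℝ × ℝ) := {p | |p.1| < |m| + 1 ∧ p.2 < m ^ 2 + v + 1 ∧ v / 2 < p.2 - p.1 ^ 2}
  have hU : U ∈ 𝓝 (m, m ^ 2 + v) := by
    refine IsOpen.mem_nhds ((isOpen_lt continuous_fst.abs continuous_const).inter
      ((isOpen_lt continuous_snd continuous_const).inter
        (isOpen_lt continuous_const (continuous_snd.sub (continuous_fst.pow 2))))) ?_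
    exact ⟨by simp, by simp, by simpa [v] using exp_pos l0⟩
  have hfar := tendsto_measure_preimage_compl_of_ae_tendsto (fun n => by fun_prop)
    (ae_tendsto_sampleMoments_of_gaussianReal hmeas hindep hlaw) hU
  obtain ⟨N, hN⟩ := eventually_atTop.1 (hfar.eventually_lt_const (ENNReal.ofReal_pos.2 hε))
  refine ⟨|ml| + |log (v / 2)| + |log (2 * (m ^ 2 + v + 1 + (2 * (|m| + 1) + |a| * |mθ|) ^ 2))|,
    max N 2, fun n hn => (measure_mono fun ω hω hωU => ?_).trans_lt (hN n (le_of_max_le_left hn))⟩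
  obtain ⟨hmean, hsq, hvar⟩ := hωU
  exact hω.not_ge ((hfix n ω).abs_μl_le_of_moments (le_of_max_le_right hn) (by positivity)
    hmean.le hsq.le (by linarith))

/-- In the linear transform model, along any sequence of variational Laplace
fixed points: (i) deterministically, `|μ_θ⁽ⁿ⁾| ≤ |ȳₙ|/|a| + |m_θ|` for every `n`; and (ii) the
sequence `μ_λ⁽ⁿ⁾` is bounded in probability, i.e. `μ_λ⁽ⁿ⁾ = O_P(1)`. -/
theorem vl_means_bounded
    {Ω : Type*} [MeasurableSpace Ω] (P : Measure Ω) [IsProbabilityMeasure P]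
    (a θ0 l0 mθ sθ ml sl : ℝ) (ha : a ≠ 0) (hsθ : 0 < sθ) (hsl : 0 < sl)
    -- i.i.d. observations with law `N(a·θ0, exp λ0)`
    (y : ℕ → Ω → ℝ) (hmeas : ∀ i, Measurable (y i))
    (hindep : iIndepFun y P)
    (hlaw : ∀ i, Measure.map (y i) P
      = gaussianReal (a * θ0) ⟨Real.exp l0, (Real.exp_pos l0).le⟩)
    -- a sequence of variational Laplace fixed points
    (μθn σθn μln σln : ℕ → Ω → ℝ)
    (hfix : ∀ n ω, IsVLFixedPoint a mθ sθ ml sl n (fun i => y i ω)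
      (μθn n ω) (σθn n ω) (μln n ω) (σln n ω)) :
    -- (i) deterministic bound on `μ_θ⁽ⁿ⁾`
    (∀ (n : ℕ) ω,
      |μθn n ω| ≤ |(∑ i ∈ Finset.range n, y i ω) / n| / |a| + |mθ|) ∧
    -- (ii) `μ_λ⁽ⁿ⁾` is bounded in probability
    (∀ ε > 0, ∃ M : ℝ, ∃ N : ℕ, ∀ n ≥ N,
      P {ω | M < |μln n ω|} < ENNReal.ofReal ε) :=
  vl_means_bounded_general P a θ0 l0 mθ sθ ml sl y hmeas hindep hlaw μθn σθn μln σln hfix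
end
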